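/- Let X be a Banach space, K ⊆ X* a nonempty weak*-compact set, ξ an ordinal, D a weak neighborhood basis at 0 in X directed by reverse inclusion, and Ω_ξ = Γ_ξD. Suppose σ, ε, a > 0 with a/σ > ε, (x_t)_{t∈Ω_ξ} ⊆ σB_X is normally weakly null, and (x*_t)_{t∈MAX(Ω_ξ)} ⊆ K satisfies Re x*_t(x_s) ≥ a for every s ⪯ t ∈ MAX(Ω_ξ). Then s_ε^{ω^ξ}(K) ∩ (the weak*-closure of {x*_t : t ∈ MAX(Ω_ξ)}) is nonempty. -/

import Mathlib

/-!
Common definitions formalizing the notions of Causey, "Power type ξ-asymptotically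
uniformly smooth norms": Szlenk derivations and indices, B-trees, weakly null and
weak*-null collections, the moduli ρ_ξ and δ_ξ^{w*}, the trees Γ_ξ, Γ_{ξ,n}, Γ_{ξ,∞}
with their levels and probability weights, and related quantities.
-/

noncomputable section

open Ordinal Set Metric Filter NormedSpace Pointwise
open scoped Classical ENNReal Topology

universe u v

namespace SzlenkPaper

/-! ### B-trees of finite sequences

Finite sequences in `Λ` are modelled by `List Λ`; `s <+: t` (list prefix) is the
initial segment order `s ⪯ t`, and the proper initial segment order `s ≺ t` is
`s <+: t ∧ s ≠ t`. -/

/-- `B` is a B-tree : a set of nonempty finite sequences which, after adding the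
empty sequence, is downward closed under initial segments. -/
def IsBTree {Λ : Type v} (B : Set (List Λ)) : Prop :=
  [] ∉ B ∧ ∀ t ∈ B, ∀ s : List Λ, s ≠ [] → s <+: t → s ∈ B

/-- The `≺`-maximal members of a set of finite sequences. -/
def maxMembers {Λ : Type v} (B : Set (List Λ)) : Set (List Λ) :=
  {t | t ∈ B ∧ ¬∃ s ∈ B, t <+: s ∧ t ≠ s}

/-- `B' = B \ MAX(B)`, the derived tree. -/
def treeDeriv {Λ : Type v} (B : Set (List Λ)) : Set (List Λ) :=
  {t | t ∈ B ∧ ∃ s ∈ B, t <+: s ∧ t ≠ s}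

/-- Transfinite iterates `B^ζ` of the tree derivation: `B^0 = B`,
`B^{ζ+1} = (B^ζ)'`, with intersections at limit ordinals. -/
def treeIter {Λ : Type v} (B : Set (List Λ)) (o : Ordinal.{0}) : Set (List Λ) :=
  Ordinal.limitRecOn (motive := fun _ => Set (List Λ)) o B (fun _ S => treeDeriv S)
    (fun o' _ f => ⋂ ζ : Set.Iio o', f ζ.1 (Set.mem_Iio.mp ζ.2))

/-- `o(B) = o` : the least ordinal at which the iterated derivation of `B` is empty is `o`. -/
def hasOrder {Λ : Type v} (B : Set (List Λ)) (o : Ordinal.{0}) : Prop :=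
  treeIter B o = ∅ ∧ ∀ ζ : Ordinal.{0}, ζ < o → treeIter B ζ ≠ ∅

/-- The (finite) set of initial segments `s ⪯ t` of `t` which belong to `B`. -/
def branchFinset {Λ : Type v} (B : Set (List Λ)) (t : List Λ) : Finset (List Λ) :=
  t.inits.toFinset.filter fun s => s ∈ B

section WeakTopology

variable {X : Type u} [NormedAddCommGroup X] [NormedSpace ℝ X]

/-- The closure of a set in the weak topology of `X`. -/
def weakClosure (S : Set X) : Set X :=
  ⇑(toWeakSpace ℝ X) ⁻¹' closure (⇑(toWeakSpace ℝ X) '' S)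

/-- The filter of weak neighborhoods of a point of `X`. -/
def weakNhds (x : X) : Filter X :=
  Filter.comap (⇑(toWeakSpace ℝ X)) (𝓝 (toWeakSpace ℝ X x))

/-- The closure of a set of functionals in the weak* topology of `X*`. -/
def wstarClosure (S : Set (StrongDual ℝ X)) : Set (StrongDual ℝ X) :=
  ⇑(StrongDual.toWeakDual (𝕜 := ℝ) (E := X)) ⁻¹'
    closure (⇑(StrongDual.toWeakDual (𝕜 := ℝ) (E := X)) '' S)

/-- The filter of weak* neighborhoods of a functional in `X*`. -/
def wstarNhds (f : StrongDual ℝ X) : Filter (StrongDual ℝ X) :=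
  Filter.comap (⇑(StrongDual.toWeakDual (𝕜 := ℝ) (E := X))) (𝓝 (StrongDual.toWeakDual f))

/-- A set of functionals is weak*-compact if it is compact in the weak* topology. -/
def IsWStarCompact (K : Set (StrongDual ℝ X)) : Prop :=
  IsCompact (⇑(StrongDual.toWeakDual (𝕜 := ℝ) (E := X)) '' K)

/-! ### Szlenk derivations -/

/-- The Szlenk derivation `s_ε(K)`: the points of `K` all of whose weak*
neighborhoods `V` satisfy `diam (V ∩ K) > ε`; by convention `s_ε(K) = K` for `ε ≤ 0`. -/
def szDeriv (ε : ℝ) (K : Set (StrongDual ℝ X)) : Set (StrongDual ℝ X) :=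
  if ε ≤ 0 then K else {f | f ∈ K ∧ ∀ V ∈ wstarNhds f, ε < diam (V ∩ K)}

/-- Transfinite iterates `s_ε^o(K)` of the Szlenk derivation. -/
def szIter (ε : ℝ) (K : Set (StrongDual ℝ X)) (o : Ordinal.{0}) : Set (StrongDual ℝ X) :=
  Ordinal.limitRecOn (motive := fun _ => Set (StrongDual ℝ X)) o K (fun _ S => szDeriv ε S)
    (fun o' _ f => ⋂ ζ : Set.Iio o', f ζ.1 (Set.mem_Iio.mp ζ.2))

/-- `Sz(K) ≤ o`, i.e. for every `ε > 0` the iterated derivation is empty by stage `o`. -/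
def SzLe (K : Set (StrongDual ℝ X)) (o : Ordinal.{0}) : Prop :=
  ∀ ε : ℝ, 0 < ε → szIter ε K o = ∅

/-- `Sz(K) = o`. -/
def SzEq (K : Set (StrongDual ℝ X)) (o : Ordinal.{0}) : Prop :=
  SzLe K o ∧ ∀ ζ : Ordinal.{0}, ζ < o → ∃ ε : ℝ, 0 < ε ∧ szIter ε K ζ ≠ ∅

/-- `s_{ξ,ε}(K) = s_ε^{ω^ξ}(K)`. -/
def szIterXi (ξ : Ordinal.{0}) (ε : ℝ) (K : Set (StrongDual ℝ X)) : Set (StrongDual ℝ X) :=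
  szIter ε K (omega0 ^ ξ)

/-- Iterated application `s_{ξ,ε_1} s_{ξ,ε_2} ⋯ s_{ξ,ε_n}(K)` for a list `[ε_1,…,ε_n]`. -/
def multiDeriv (ξ : Ordinal.{0}) : List ℝ → Set (StrongDual ℝ X) → Set (StrongDual ℝ X)
  | [], K => K
  | e :: l, K => szIterXi ξ e (multiDeriv ξ l K)

/-- `Sz_ξ(K,ε)`: the least `n ∈ ℕ` such that `s_ε^{ω^ξ·n}(K) = ∅` (meaningful when
`Sz(K) ≤ ω^{ξ+1}`, in which case the least such ordinal is a natural number). -/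
def szNat (ξ : Ordinal.{0}) (ε : ℝ) (K : Set (StrongDual ℝ X)) : ℕ :=
  sInf {n : ℕ | szIter ε K (omega0 ^ ξ * n) = ∅}

/-- The ξ-Szlenk power type `p_ξ(K) = limsup_{ε→0⁺} log Sz_ξ(K,ε) / |log ε|`, with
value `∞` when `Sz(K) > ω^{ξ+1}`. -/
def szPower (ξ : Ordinal.{0}) (K : Set (StrongDual ℝ X)) : ℝ≥0∞ :=
  if SzLe K (omega0 ^ (ξ + 1)) then
    Filter.limsup (fun ε : ℝ =>
      ENNReal.ofReal (Real.log (szNat ξ ε K : ℝ) / |Real.log ε|)) (𝓝[>] (0 : ℝ))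
  else ⊤

variable {Y : Type u} [NormedAddCommGroup Y] [NormedSpace ℝ Y]

/-- `A* B_{Y*}`: the image of the closed unit ball of `Y*` under the adjoint of `A`. -/
def adjBall (A : X →L[ℝ] Y) : Set (StrongDual ℝ X) :=
  (fun g : StrongDual ℝ Y => g.comp A) '' Metric.closedBall 0 1

/-- The ξ-Szlenk power type of an operator, `p_ξ(A) = p_ξ(A*B_{Y*})`. -/
def szPowerOp (ξ : Ordinal.{0}) (A : X →L[ℝ] Y) : ℝ≥0∞ :=
  szPower ξ (adjBall A)

/-- The ξ-Szlenk power type of a Banach space, `p_ξ(X) = p_ξ(B_{X*})`. -/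
def szPowerSp (ξ : Ordinal.{0}) (X : Type u) [NormedAddCommGroup X] [NormedSpace ℝ X] : ℝ≥0∞ :=
  szPower ξ (Metric.closedBall (0 : StrongDual ℝ X) 1)

end WeakTopology

section Collections

variable {X Y : Type u} [NormedAddCommGroup X] [NormedSpace ℝ X]
  [NormedAddCommGroup Y] [NormedSpace ℝ Y]

/-- A weakly null collection `(x_t)_{t ∈ B}` : for every ordinal `ζ` and every
`t ∈ (B ∪ {∅})^{ζ+1}`, `0` belongs to the weak closure of `{x_s : s ∈ B^ζ, s⁻ = t}`. -/
def WeaklyNullColl {Λ : Type v} (B : Set (List Λ)) (g : List Λ → X) : Prop :=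
  ∀ ζ : Ordinal.{0}, ∀ t ∈ treeIter (insert [] B) (ζ + 1),
    (0 : X) ∈ weakClosure {x : X | ∃ s ∈ treeIter B ζ, s ≠ [] ∧ s.dropLast = t ∧ x = g s}

/-- A weak*-null collection `(z*_t)_{t ∈ B}` in `Y*`. -/
def WStarNullColl {Λ : Type v} (B : Set (List Λ)) (z : List Λ → StrongDual ℝ Y) : Prop :=
  ∀ ζ : Ordinal.{0}, ∀ t ∈ treeIter (insert [] B) (ζ + 1),
    (0 : StrongDual ℝ Y) ∈ wstarClosure {w : StrongDual ℝ Y | ∃ s ∈ treeIter B ζ, s ≠ [] ∧ s.dropLast = t ∧ w = z s}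

/-- `co(x_s : s ⪯ t, s ∈ B)`, the convex hull of the values along the branch through `t`. -/
def branchHull {Λ : Type v} (B : Set (List Λ)) (g : List Λ → X) (t : List Λ) : Set X :=
  convexHull ℝ {x : X | ∃ s ∈ B, s <+: t ∧ x = g s}

/-! ### Norms and moduli -/

/-- `N` is a norm on `Y`. -/
def IsNormOn (N : Y → ℝ) : Prop :=
  N 0 = 0 ∧ (∀ y : Y, y ≠ 0 → 0 < N y) ∧ (∀ (c : ℝ) (y : Y), N (c • y) = |c| * N y) ∧
    ∀ y z : Y, N (y + z) ≤ N y + N z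

/-- `N` is a norm on `Y` equivalent to the given norm. -/
def IsEquivNorm (N : Y → ℝ) : Prop :=
  IsNormOn N ∧ ∃ c C : ℝ, 0 < c ∧ 0 < C ∧ ∀ y : Y, c * ‖y‖ ≤ N y ∧ N y ≤ C * ‖y‖

/-- `N` is a `2`-equivalent norm on `Y`: `‖y‖/2 ≤ N y ≤ 2‖y‖`. -/
def IsTwoEquivNorm (N : Y → ℝ) : Prop :=
  IsNormOn N ∧ ∀ y : Y, (1 / 2) * ‖y‖ ≤ N y ∧ N y ≤ 2 * ‖y‖

/-- The dual norm on `Y*` of a norm `N` on `Y`. -/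
def dualNormOf (N : Y → ℝ) (g : StrongDual ℝ Y) : ℝ :=
  sSup {r : ℝ | ∃ y : Y, N y ≤ 1 ∧ r = |g y|}

/-- The modulus `ρ_ξ(σ; A : X → (Y,N))` of ξ-asymptotic uniform smoothness of the
operator `A`, where `Y` carries the (equivalent) norm `N`:
`sup inf {N(y + Ax) − 1 : t ∈ B, x ∈ co(x_s : s ⪯ t)}`, the supremum taken over
all `y` in the `N`-unit ball of `Y`, all B-trees `B` with `o(B) = ω^ξ`, and all
weakly null collections `(x_t)_{t ∈ B} ⊆ σ B_X`. -/
def rhoWith (ξ : Ordinal.{0}) (A : X →L[ℝ] Y) (N : Y → ℝ) (σ : ℝ) : ℝ :=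
  sSup {r : ℝ | ∃ y : Y, N y ≤ 1 ∧
    ∃ (Λ : Type (max u 1)) (B : Set (List Λ)) (g : List Λ → X),
      IsBTree B ∧ hasOrder B (omega0 ^ ξ) ∧ WeaklyNullColl B g ∧ (∀ t ∈ B, ‖g t‖ ≤ σ) ∧
      r = sInf {c : ℝ | ∃ t ∈ B, ∃ x ∈ branchHull B g t, c = N (y + A x) - 1}}

/-- `ρ_ξ(σ; A)` with the given norm of `Y`. -/
def rho (ξ : Ordinal.{0}) (A : X →L[ℝ] Y) (σ : ℝ) : ℝ :=
  rhoWith ξ A (fun y => ‖y‖) σ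

/-- `A : X → (Y,N)` is ξ-asymptotically uniformly smooth with power type `p`:
`ρ_ξ(σ;A) ≤ C σ^p` for all `0 < σ ≤ 1`. -/
def AUSWith (ξ : Ordinal.{0}) (A : X →L[ℝ] Y) (N : Y → ℝ) (p : ℝ) : Prop :=
  ∃ C : ℝ, ∀ σ : ℝ, 0 < σ → σ ≤ 1 → rhoWith ξ A N σ ≤ C * σ ^ p

/-- `A : X → (Y,N)` is ξ-asymptotically uniformly smooth with power type `∞`. -/
def AUSInfWith (ξ : Ordinal.{0}) (A : X →L[ℝ] Y) (N : Y → ℝ) : Prop :=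
  ∃ C : ℝ, ∀ (y : Y) (b : ℝ), 0 < b →
    ∀ (Λ : Type (max u 1)) (B : Set (List Λ)) (g : List Λ → X),
      IsBTree B → hasOrder B (omega0 ^ ξ) → WeaklyNullColl B g → (∀ t ∈ B, ‖g t‖ ≤ b) →
      sInf {c : ℝ | ∃ t ∈ B, ∃ x ∈ branchHull B g t, c = N (y + A x)} ≤ max (N y) (C * b)

/-- The set of constants `C > 0` witnessing the quantity `t_{ξ,p}(A)`: for every
`y ∈ Y`, `σ > 0`, every B-tree `B` with `o(B) = ω^ξ` and every weakly null
`(x_t)_{t∈B} ⊆ σ B_X`, `inf {‖y + Ax‖^p} ≤ ‖y‖^p + C σ^p`.  `t_{ξ,p}(A)` itself is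
the infimum of this set. -/
def tConstSet (ξ : Ordinal.{0}) (A : X →L[ℝ] Y) (p : ℝ) : Set ℝ :=
  {C : ℝ | 0 < C ∧ ∀ (y : Y) (σ : ℝ), 0 < σ →
    ∀ (Λ : Type (max u 1)) (B : Set (List Λ)) (g : List Λ → X),
      IsBTree B → hasOrder B (omega0 ^ ξ) → WeaklyNullColl B g → (∀ t ∈ B, ‖g t‖ ≤ σ) →
      sInf {c : ℝ | ∃ t ∈ B, ∃ x ∈ branchHull B g t, c = ‖y + A x‖ ^ p} ≤ ‖y‖ ^ p + C * σ ^ p}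

/-- The set of constants `C > 0` witnessing `t_{ξ,∞}(A)`:
`inf {‖y + Ax‖} ≤ max {‖y‖, C σ}` under the same quantification. -/
def tInfConstSet (ξ : Ordinal.{0}) (A : X →L[ℝ] Y) : Set ℝ :=
  {C : ℝ | 0 < C ∧ ∀ (y : Y) (σ : ℝ), 0 < σ →
    ∀ (Λ : Type (max u 1)) (B : Set (List Λ)) (g : List Λ → X),
      IsBTree B → hasOrder B (omega0 ^ ξ) → WeaklyNullColl B g → (∀ t ∈ B, ‖g t‖ ≤ σ) →
      sInf {c : ℝ | ∃ t ∈ B, ∃ x ∈ branchHull B g t, c = ‖y + A x‖} ≤ max ‖y‖ (C * σ)}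

/-- Modulus `δ^{w*}_ξ(τ; A* : (Y,N)* → X*)` of weak*-ξ-asymptotic uniform convexity
of the adjoint `A*`, with `Y` renormed by `N`: the infimum over `y*` of `N`-dual-norm `1`,
B-trees `B` with `o(B) = ω^ξ`, and weak*-null `(A*,τ)`-large collections `(z*_s)_{s∈B}`
of `sup {N*(y* + Σ_{s ⪯ t} z*_s) − 1 : t ∈ B}`. -/
def deltaWith (ξ : Ordinal.{0}) (A : X →L[ℝ] Y) (N : Y → ℝ) (τ : ℝ) : ℝ :=
  sInf {r : ℝ | ∃ g : StrongDual ℝ Y, dualNormOf N g = 1 ∧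
    ∃ (Λ : Type (max u 1)) (B : Set (List Λ)) (z : List Λ → StrongDual ℝ Y),
      IsBTree B ∧ hasOrder B (omega0 ^ ξ) ∧ WStarNullColl B z ∧
      (∀ s ∈ B, τ < ‖(z s).comp A‖) ∧
      r = sSup {c : ℝ | ∃ t ∈ B, c = dualNormOf N (g + ∑ s ∈ branchFinset B t, z s) - 1}}

/-- `δ^{w*}_ξ(τ; A*)` with the original norm of `Y`. -/
def deltaOp (ξ : Ordinal.{0}) (A : X →L[ℝ] Y) (τ : ℝ) : ℝ :=
  sInf {r : ℝ | ∃ g : StrongDual ℝ Y, ‖g‖ = 1 ∧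
    ∃ (Λ : Type (max u 1)) (B : Set (List Λ)) (z : List Λ → StrongDual ℝ Y),
      IsBTree B ∧ hasOrder B (omega0 ^ ξ) ∧ WStarNullColl B z ∧
      (∀ s ∈ B, τ < ‖(z s).comp A‖) ∧
      r = sSup {c : ℝ | ∃ t ∈ B, c = ‖g + ∑ s ∈ branchFinset B t, z s‖ - 1}}

/-- `A* : (Y,N)* → X*` is weak*-ξ-asymptotically uniformly convex with power type `p`:
`δ^{w*}_ξ(τ;A*) ≥ c τ^p` for all `0 < τ ≤ 1`. -/
def AUCWith (ξ : Ordinal.{0}) (A : X →L[ℝ] Y) (N : Y → ℝ) (p : ℝ) : Prop :=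
  ∃ c : ℝ, 0 < c ∧ ∀ τ : ℝ, 0 < τ → τ ≤ 1 → c * τ ^ p ≤ deltaWith ξ A N τ

/-! ### Space (identity operator) versions, for a renorming `N` of `X` itself. -/

/-- The modulus `ρ_ξ(σ)` of the norm `N` on `X`. -/
def rhoSpace (ξ : Ordinal.{0}) (N : X → ℝ) (σ : ℝ) : ℝ :=
  sSup {r : ℝ | ∃ y : X, N y ≤ 1 ∧
    ∃ (Λ : Type (max u 1)) (B : Set (List Λ)) (g : List Λ → X),
      IsBTree B ∧ hasOrder B (omega0 ^ ξ) ∧ WeaklyNullColl B g ∧ (∀ t ∈ B, N (g t) ≤ σ) ∧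
      r = sInf {c : ℝ | ∃ t ∈ B, ∃ x ∈ branchHull B g t, c = N (y + x) - 1}}

/-- The norm `N` on `X` is ξ-asymptotically uniformly smooth with power type `p`. -/
def AUSSpace (ξ : Ordinal.{0}) (N : X → ℝ) (p : ℝ) : Prop :=
  ∃ C : ℝ, ∀ σ : ℝ, 0 < σ → σ ≤ 1 → rhoSpace ξ N σ ≤ C * σ ^ p

/-- The modulus `δ^{w*}_ξ(τ)` of the dual norm of `N` on `X*`. -/
def deltaSpace (ξ : Ordinal.{0}) (N : X → ℝ) (τ : ℝ) : ℝ :=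
  sInf {r : ℝ | ∃ g : StrongDual ℝ X, dualNormOf N g = 1 ∧
    ∃ (Λ : Type (max u 1)) (B : Set (List Λ)) (z : List Λ → StrongDual ℝ X),
      IsBTree B ∧ hasOrder B (omega0 ^ ξ) ∧ WStarNullColl B z ∧
      (∀ s ∈ B, τ < dualNormOf N (z s)) ∧
      r = sSup {c : ℝ | ∃ t ∈ B, c = dualNormOf N (g + ∑ s ∈ branchFinset B t, z s) - 1}}

/-- The dual norm of `N` on `X*` is weak*-ξ-asymptotically uniformly convex with
power type `p`. -/
def AUCSpace (ξ : Ordinal.{0}) (N : X → ℝ) (p : ℝ) : Prop :=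
  ∃ c : ℝ, 0 < c ∧ ∀ τ : ℝ, 0 < τ → τ ≤ 1 → c * τ ^ p ≤ deltaSpace ξ N τ

end Collections

/-! ### The trees `Γ_ξ`, `Γ_{ξ,n}`, `Γ_{ξ,∞}`, their levels, and the weights `ℙ_ξ`. -/

/-- `ζ + S`: shift every entry of every sequence in `S` by `ζ`. -/
def shiftSet (ζ : Ordinal.{0}) (S : Set (List Ordinal.{0})) : Set (List Ordinal.{0}) :=
  (fun t => t.map fun a => ζ + a) '' S

/-- `gammaStep ξ G n = Γ_{ξ,n+1}` built from `G = Γ_ξ`: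
`Γ_{ξ,1} = Γ_ξ` and `Γ_{ξ,n+1} = (ω^ξ·n + Γ_ξ) ∪ {t ⌢ u : t ∈ MAX(ω^ξ·n + Γ_ξ), u ∈ Γ_{ξ,n}}`. -/
def gammaStep (ξ : Ordinal.{0}) (G : Set (List Ordinal.{0})) : ℕ → Set (List Ordinal.{0})
  | 0 => G
  | n + 1 =>
    shiftSet (omega0 ^ ξ * ((n : Ordinal.{0}) + 1)) G ∪
      {w | ∃ t ∈ maxMembers (shiftSet (omega0 ^ ξ * ((n : Ordinal.{0}) + 1)) G),
        ∃ u ∈ gammaStep ξ G n, w = t ++ u}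

/-- The B-trees `Γ_ξ`: `Γ_0 = {(0)}`, `Γ_{ξ+1} = ⋃_n Γ_{ξ,n}`, and at limit `ξ`,
`Γ_ξ = ⋃_{ζ<ξ} (ω^ζ + Γ_{ζ+1})`. -/
def Gamma (ξ : Ordinal.{0}) : Set (List Ordinal.{0}) :=
  Ordinal.limitRecOn (motive := fun _ => Set (List Ordinal.{0})) ξ
    {[(0 : Ordinal.{0})]}
    (fun ζ G => ⋃ n : ℕ, gammaStep ζ G n)
    (fun _ hξ f => ⋃ η : Set.Iio _,
      shiftSet (omega0 ^ (η.1 : Ordinal.{0}))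
        (f (Order.succ η.1) (hξ.succ_lt (Set.mem_Iio.mp η.2))))

/-- `Γ_{ξ,n}` for `n ≥ 1` (junk value `Γ_ξ` for `n = 0`). -/
def GammaN (ξ : Ordinal.{0}) (n : ℕ) : Set (List Ordinal.{0}) :=
  gammaStep ξ (Gamma ξ) (n - 1)

/-- The level `Λ_{ξ,n,m}` of `Γ_{ξ,n}`: sequences of the form
`(ω^ξ(n−1)+t_1) ⌢ … ⌢ (ω^ξ(n−m)+t_m)` with `t_i ∈ Γ_ξ` nonempty and
`t_1, …, t_{m−1}` maximal in `Γ_ξ`. -/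
def levelN (ξ : Ordinal.{0}) (n m : ℕ) : Set (List Ordinal.{0}) :=
  {w | ∃ ts : Fin m → List Ordinal.{0},
    (∀ i, ts i ∈ Gamma ξ ∧ ts i ≠ []) ∧
    (∀ i : Fin m, (i : ℕ) + 1 < m → ts i ∈ maxMembers (Gamma ξ)) ∧
    w = (List.ofFn fun i : Fin m =>
      (ts i).map fun a => omega0 ^ ξ * ((n - 1 - (i : ℕ) : ℕ) : Ordinal.{0}) + a).flatten}

/-- The level `Λ_{ξ,∞,m}` of `Γ_{ξ,∞}`: sequences
`t_1 ⌢ (ω^ξ + t_2) ⌢ … ⌢ (ω^ξ(m−1) + t_m)` with `t_i ∈ Γ_ξ` nonempty and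
`t_1, …, t_{m−1}` maximal in `Γ_ξ`. -/
def levelInf (ξ : Ordinal.{0}) (m : ℕ) : Set (List Ordinal.{0}) :=
  {w | ∃ ts : Fin m → List Ordinal.{0},
    (∀ i, ts i ∈ Gamma ξ ∧ ts i ≠ []) ∧
    (∀ i : Fin m, (i : ℕ) + 1 < m → ts i ∈ maxMembers (Gamma ξ)) ∧
    w = (List.ofFn fun i : Fin m =>
      (ts i).map fun a => omega0 ^ ξ * ((i : ℕ) : Ordinal.{0}) + a).flatten}

/-- `Γ_{ξ,∞} = ⋃_{m ≥ 1} Λ_{ξ,∞,m}`. -/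
def GammaInf (ξ : Ordinal.{0}) : Set (List Ordinal.{0}) :=
  ⋃ m : ℕ, levelInf ξ (m + 1)

/-- The unit-wise identification `ι` sending a member of `Γ_{ξ,n}` (or `Γ_{ξ,∞}`)
to the member of `Γ_ξ` obtained by unshifting its last unit: the last block of
entries lying in the same `ω^ξ`-range as the final entry, unshifted. -/
def iota (ξ : Ordinal.{0}) (t : List Ordinal.{0}) : List Ordinal.{0} :=
  match t.getLast? with
  | none => []
  | some o =>
    ((t.reverse.takeWhile fun a => decide (a / omega0 ^ ξ = o / omega0 ^ ξ)).reverse).map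
      fun a => a - omega0 ^ ξ * (o / omega0 ^ ξ)

/-- The weights `ℙ_ξ : Γ_ξ → [0,1]`: `ℙ_0 ≡ 1`; `ℙ_{ξ+1}(t) = (1/n) ℙ_ξ(ι_{ξ,n}(t))`
for `t ∈ Γ_{ξ,n}` (here `n` is recovered from the first entry of `t`); at limit `ξ`,
`ℙ_ξ(t) = ℙ_{ζ+1}(t − ω^ζ)` where `t ∈ ω^ζ + Γ_{ζ+1}`, `ζ = log_ω(first entry)`. -/
def Pweight (ξ : Ordinal.{0}) : List Ordinal.{0} → ℝ :=
  Ordinal.limitRecOn (motive := fun _ => List Ordinal.{0} → ℝ) ξ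
    (fun _ => 1)
    (fun ζ Pz t =>
      (((t.headI / omega0 ^ ζ).card.toNat : ℝ) + 1)⁻¹ * Pz (iota ζ t))
    (fun ξ' _ f t =>
      if h : Order.succ (Ordinal.log omega0 t.headI) < ξ' then
        f (Order.succ (Ordinal.log omega0 t.headI)) h
          (t.map fun a => a - omega0 ^ Ordinal.log omega0 t.headI)
      else 0)

section OmegaTrees

variable {X Y : Type u} [NormedAddCommGroup X] [NormedSpace ℝ X]
  [NormedAddCommGroup Y] [NormedSpace ℝ Y]

/-- `D` is a weak neighborhood basis at `0` in `X`, directed by reverse inclusion. -/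
def IsWeakNhdBasis (D : Set (Set X)) : Prop :=
  (∀ U ∈ D, U ∈ weakNhds (0 : X)) ∧ (∀ V ∈ weakNhds (0 : X), ∃ U ∈ D, U ⊆ V) ∧
    ∀ U ∈ D, ∀ V ∈ D, ∃ W ∈ D, W ⊆ U ∩ V

/-- `G·D`: the tree of sequences of pairs whose ordinal coordinates form a member
of `G` and whose second coordinates belong to `D`.  For `G = Γ_ξ` this is `Ω_ξ`,
for `G = Γ_{ξ,n}` it is `Ω_{ξ,n}`, etc. -/
def OmegaOf (D : Set (Set X)) (G : Set (List Ordinal.{0})) :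
    Set (List (Ordinal.{0} × Set X)) :=
  {w | w.map Prod.fst ∈ G ∧ ∀ p ∈ w, p.2 ∈ D}

/-- A collection `(x_t)_{t ∈ Ω}` is normally weakly null: `x_t ∈ U` whenever
`t = t₁ ⌢ (ζ, U)`. -/
def NormallyWNull (Ω : Set (List (Ordinal.{0} × Set X)))
    (g : List (Ordinal.{0} × Set X) → X) : Prop :=
  ∀ w ∈ Ω, ∀ (w₁ : List (Ordinal.{0} × Set X)) (ζ : Ordinal.{0}) (U : Set X),
    w = w₁ ++ [(ζ, U)] → g w ∈ U

/-- The weight `ℙ_ξ(ι_ξ(s))` of a node of an `Ω`-tree (the `D`-coordinates are ignored). -/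
def PweightIota (ξ : Ordinal.{0}) (s : List (Ordinal.{0} × Set X)) : ℝ :=
  Pweight ξ (iota ξ (s.map Prod.fst))

/-- The full special convex combination `Σ_{s ⪯ t, s ∈ Ω} ℙ_ξ(ι_ξ(s)) x_s` along the
branch through `t` (equal to `Σ_i z_i^t` for the special convex blocks `z_i^t`). -/
def branchComb (ξ : Ordinal.{0}) (Ω : Set (List (Ordinal.{0} × Set X)))
    (g : List (Ordinal.{0} × Set X) → X) (t : List (Ordinal.{0} × Set X)) : X :=
  ∑ s ∈ t.inits.toFinset.filter (fun s => s ∈ Ω), PweightIota ξ s • g s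

/-- The special convex block `z_m^t` of `(x_s)` lying on level `m`:
`z_m^t = Σ_{s ⪯ t, s ∈ Λ_{ξ,n,m}} ℙ_ξ(ι_{ξ,n}(s)) x_s`. -/
def levelBlock (ξ : Ordinal.{0}) (n m : ℕ)
    (g : List (Ordinal.{0} × Set X) → X) (t : List (Ordinal.{0} × Set X)) : X :=
  ∑ s ∈ t.inits.toFinset.filter (fun s => s.map Prod.fst ∈ levelN ξ n m),
    PweightIota ξ s • g s

/-- The convex block of `(x_s)` along the branch-segment `t ≺ s ⪯ t'` inside `Ω`. -/
def chainBlock (ξ : Ordinal.{0}) (Ω : Set (List (Ordinal.{0} × Set X)))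
    (g : List (Ordinal.{0} × Set X) → X) (t t' : List (Ordinal.{0} × Set X)) : X :=
  ∑ s ∈ t'.inits.toFinset.filter (fun s => s ∈ Ω ∧ t <+: s ∧ s ≠ t),
    PweightIota ξ s • g s

/-- The property defining `N_ξ(σ; A)` (relative to the weak neighborhood basis `D`):
there is a normally weakly null collection `(x_t)_{t ∈ Ω_{ξ,N+1}} ⊆ σ B_X` with
`‖Σ_{i=1}^{N+1} A z_i^t‖ > 1` for every maximal `t`.  `N_ξ(σ;A)` is the least `N`
with this property. -/
def NxiProp (ξ : Ordinal.{0}) (A : X →L[ℝ] Y) (D : Set (Set X)) (σ : ℝ) (N : ℕ) : Prop :=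
  ∃ g : List (Ordinal.{0} × Set X) → X,
    NormallyWNull (OmegaOf D (GammaN ξ (N + 1))) g ∧
    (∀ t ∈ OmegaOf D (GammaN ξ (N + 1)), ‖g t‖ ≤ σ) ∧
    ∀ t ∈ maxMembers (OmegaOf D (GammaN ξ (N + 1))),
      1 < ‖A (branchComb ξ (OmegaOf D (GammaN ξ (N + 1))) g t)‖

/-- `(u_n)` is `C`-dominated by the unit vector basis of `ℓ_p`. -/
def DominatedLp (u : ℕ → Y) (p C : ℝ) : Prop :=
  ∀ (m : ℕ) (a : ℕ → ℝ),
    ‖∑ n ∈ Finset.range m, a n • u n‖ ≤ C * (∑ n ∈ Finset.range m, |a n| ^ p) ^ (1 / p)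

/-- `(u_n)` is `C`-dominated by the unit vector basis of `c₀`. -/
def DominatedC0 (u : ℕ → Y) (C : ℝ) : Prop :=
  ∀ (m : ℕ) (a : ℕ → ℝ) (b : ℝ), (∀ n ∈ Finset.range m, |a n| ≤ b) →
    ‖∑ n ∈ Finset.range m, a n • u n‖ ≤ C * b

/-- `A` satisfies ξ-`ℓ_p` upper tree estimates: every normally weakly null collection
indexed by `Ω_{ξ,∞}` in `B_X` admits a chain `∅ = t_0 ≺ t_1 ≺ ⋯` through the levels
such that the images under `A` of the special convex blocks are dominated by the unit
vector basis of `ℓ_p`. -/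
def UpperTreeEst (ξ : Ordinal.{0}) (A : X →L[ℝ] Y) (p : ℝ) : Prop :=
  ∀ D : Set (Set X), IsWeakNhdBasis D →
    ∀ g : List (Ordinal.{0} × Set X) → X,
      NormallyWNull (OmegaOf D (GammaInf ξ)) g →
      (∀ t ∈ OmegaOf D (GammaInf ξ), ‖g t‖ ≤ 1) →
      ∃ ts : ℕ → List (Ordinal.{0} × Set X), ts 0 = [] ∧
        (∀ n : ℕ, ts n <+: ts (n + 1) ∧ ts n ≠ ts (n + 1)) ∧
        (∀ n : ℕ, ts (n + 1) ∈ maxMembers (OmegaOf D (levelInf ξ (n + 1)))) ∧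
        ∃ C : ℝ, DominatedLp
          (fun n => A (chainBlock ξ (OmegaOf D (GammaInf ξ)) g (ts n) (ts (n + 1)))) p C

end OmegaTrees

/-! ### ε-largeness of functions on `Γ_ξ` -/

/-- A function `f : Γ_ξ → ℝ` is ε-large: for every `δ > 0` there is a monotone
`θ : Γ_ξ → Γ_ξ` with `f(θ(t)) ≥ ε − δ` for all `t ∈ Γ_ξ`. -/
def IsLarge (ξ : Ordinal.{0}) (f : List Ordinal.{0} → ℝ) (ε : ℝ) : Prop :=
  ∀ δ : ℝ, 0 < δ → ∃ θ : List Ordinal.{0} → List Ordinal.{0},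
    Set.MapsTo θ (Gamma ξ) (Gamma ξ) ∧
    (∀ s t : List Ordinal.{0}, s ∈ Gamma ξ → t ∈ Gamma ξ → s <+: t → s ≠ t →
      θ s <+: θ t ∧ θ s ≠ θ t) ∧
    ∀ t ∈ Gamma ξ, ε - δ ≤ f (θ t)


/-!
By transfinite induction on `β`, every node `t` of the tree `Ω_ξ ∪ {∅}` that survives `β` tree
derivations carries a functional of `s_ε^β(K)` in the weak*-closure of the `x*_s` with
`s ∈ MAX(Ω_ξ)` extending `t`. At a successor stage, the children `t ⌢ (ζ, U)`, `U ∈ D`, provide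
functionals `x*_U` with `x*_U(x_U) ≥ a`, where `x_U ∈ U ∩ σB_X`. A weak*-cluster point `x*` of the
net `(x*_U)` has `|x*(x_U)|` small for small `U`, so `‖x*_U − x*‖ ≥ (a − small)/σ > ε` there, and
`x*` survives one more Szlenk derivation. Limit stages follow from weak*-compactness. Finally,
the derived trees of `Γ_ξ` of order below `ω^ξ` are nonempty, so the root survives `ω^ξ`
derivations.
-/

section Iteration

variable {α : Type*} (F : Set α → Set α)

/-- `treeIter` and `szIter` are, definitionally, instances of this iteration. -/
def transfiniteIter (K : Set α) (o : Ordinal.{0}) : Set α :=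
  Ordinal.limitRecOn (motive := fun _ => Set α) o K (fun _ S => F S)
    (fun o' _ f => ⋂ ζ : Set.Iio o', f ζ.1 (Set.mem_Iio.mp ζ.2))

theorem transfiniteIter_zero (K : Set α) : transfiniteIter F K 0 = K := Ordinal.limitRecOn_zero ..

theorem transfiniteIter_add_one (K : Set α) (o : Ordinal.{0}) :
    transfiniteIter F K (o + 1) = F (transfiniteIter F K o) :=
  Ordinal.limitRecOn_add_one ..

theorem transfiniteIter_limit (K : Set α) {o : Ordinal.{0}} (h : Order.IsSuccLimit o) :
    transfiniteIter F K o = ⋂ ζ : Set.Iio o, transfiniteIter F K ζ :=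
  Ordinal.limitRecOn_limit _ _ _ _ h

theorem transfiniteIter_induction (P : Set α → Prop) {K : Set α} (hK : P K)
    (hF : ∀ S, P S → P (F S))
    (hinter : ∀ (ι : Type 1) [Nonempty ι] (S : ι → Set α), (∀ i, P (S i)) → P (⋂ i, S i))
    (o : Ordinal.{0}) : P (transfiniteIter F K o) := by
  induction o using Ordinal.limitRecOn with
  | zero => rwa [transfiniteIter_zero]
  | add_one o ih => rw [transfiniteIter_add_one]; exact hF _ ih
  | limit o ho ih =>
    have : Nonempty (Set.Iio o) := ⟨⟨0, ho.bot_lt⟩⟩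
    rw [transfiniteIter_limit F K ho]
    exact hinter _ _ fun ζ => ih ζ.1 ζ.2

variable {F}

theorem transfiniteIter_subset (hF : ∀ S, F S ⊆ S) (K : Set α) (o : Ordinal.{0}) :
    transfiniteIter F K o ⊆ K :=
  transfiniteIter_induction F (· ⊆ K) subset_rfl (fun S hS => (hF S).trans hS)
    (fun ι _ S hS => (Set.iInter_subset S (Classical.arbitrary ι)).trans (hS _)) o

theorem transfiniteIter_antitone (hF : ∀ S, F S ⊆ S) (K : Set α) :
    Antitone (transfiniteIter F K) := by
  intro o₁ o₂ h
  induction o₂ using Ordinal.limitRecOn with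
  | zero => rw [nonpos_iff_eq_zero.mp h]
  | add_one o ih =>
    rcases h.lt_or_eq with h | rfl
    · rw [transfiniteIter_add_one]
      exact (hF _).trans (ih (Order.lt_add_one_iff.mp h))
    · rfl
  | limit o ho ih =>
    rcases h.lt_or_eq with h | rfl
    · rw [transfiniteIter_limit F K ho]
      exact Set.iInter_subset (fun ζ : Set.Iio o => transfiniteIter F K ζ) ⟨o₁, h⟩
    · rfl

theorem transfiniteIter_mono (hF : Monotone F) {K K' : Set α} (h : K ⊆ K') (o : Ordinal.{0}) :
    transfiniteIter F K o ⊆ transfiniteIter F K' o := by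
  induction o using Ordinal.limitRecOn with
  | zero => rwa [transfiniteIter_zero, transfiniteIter_zero]
  | add_one o ih => rw [transfiniteIter_add_one, transfiniteIter_add_one]; exact hF ih
  | limit o ho ih =>
    rw [transfiniteIter_limit F K ho, transfiniteIter_limit F K' ho]
    exact Set.iInter_mono fun ζ => ih ζ.1 ζ.2

theorem transfiniteIter_add (hF : ∀ S, F S ⊆ S) (K : Set α) (δ γ : Ordinal.{0}) :
    transfiniteIter F K (δ + γ) = transfiniteIter F (transfiniteIter F K δ) γ := by
  induction γ using Ordinal.limitRecOn with
  | zero => rw [add_zero, transfiniteIter_zero]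
  | add_one γ ih => rw [← add_assoc, transfiniteIter_add_one, transfiniteIter_add_one, ih]
  | limit γ hγ ih =>
    rw [transfiniteIter_limit F _ hγ, transfiniteIter_limit F K (Ordinal.isSuccLimit_add δ hγ)]
    refine subset_antisymm (Set.subset_iInter fun γ' => ?_) (Set.subset_iInter fun η => ?_)
    · rw [← ih γ' γ'.2]
      exact Set.iInter_subset (fun η : Set.Iio (δ + γ) => transfiniteIter F K η)
        ⟨δ + γ', (add_lt_add_iff_left δ).mpr γ'.2⟩
    · rcases lt_or_ge η.1 δ with hη | hη
      · refine (Set.iInter_subset _ ⟨0, hγ.bot_lt⟩).trans ?_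
        rw [← ih 0 hγ.bot_lt, add_zero]
        exact transfiniteIter_antitone hF K hη.le
      · have hlt : η.1 - δ < γ := by
          rw [← add_lt_add_iff_left δ, Ordinal.add_sub_cancel_of_le hη]
          exact η.2
        refine (Set.iInter_subset _ ⟨η.1 - δ, hlt⟩).trans ?_
        rw [← ih _ hlt, Ordinal.add_sub_cancel_of_le hη]

theorem transfiniteIter_map {β : Type*} {F' : Set β → Set β} (Φ : Set α → Set β)
    (hF : ∀ S, Φ (F S) = F' (Φ S))
    (hinter : ∀ (ι : Type 1) [Nonempty ι] (S : ι → Set α), Φ (⋂ i, S i) = ⋂ i, Φ (S i))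
    (K : Set α) (o : Ordinal.{0}) : Φ (transfiniteIter F K o) = transfiniteIter F' (Φ K) o := by
  induction o using Ordinal.limitRecOn with
  | zero => rw [transfiniteIter_zero, transfiniteIter_zero]
  | add_one o ih => rw [transfiniteIter_add_one, transfiniteIter_add_one, hF, ih]
  | limit o ho ih =>
    have : Nonempty (Set.Iio o) := ⟨⟨0, ho.bot_lt⟩⟩
    rw [transfiniteIter_limit F K ho, transfiniteIter_limit F' (Φ K) ho, hinter]
    exact Set.iInter_congr fun ζ => ih ζ.1 ζ.2

end Iteration

section Trees

variable {Λ : Type*}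

theorem treeDeriv_subset (B : Set (List Λ)) : treeDeriv B ⊆ B := fun _ ht => ht.1

theorem treeDeriv_mono : Monotone (treeDeriv (Λ := Λ)) :=
  fun _ _ h _ ht => ⟨h ht.1, ht.2.imp fun _ hs => ⟨h hs.1, hs.2⟩⟩

theorem treeIter_zero (B : Set (List Λ)) : treeIter B 0 = B := transfiniteIter_zero _ B

theorem treeIter_add_one (B : Set (List Λ)) (o : Ordinal.{0}) :
    treeIter B (o + 1) = treeDeriv (treeIter B o) := transfiniteIter_add_one _ B o

theorem treeIter_limit (B : Set (List Λ)) {o : Ordinal.{0}} (h : Order.IsSuccLimit o) :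
    treeIter B o = ⋂ ζ : Set.Iio o, treeIter B ζ := transfiniteIter_limit _ B h

theorem treeIter_subset (B : Set (List Λ)) (o : Ordinal.{0}) : treeIter B o ⊆ B :=
  transfiniteIter_subset treeDeriv_subset B o

theorem treeIter_antitone (B : Set (List Λ)) : Antitone (treeIter B) :=
  transfiniteIter_antitone treeDeriv_subset B

theorem treeIter_mono {B C : Set (List Λ)} (h : B ⊆ C) (o : Ordinal.{0}) :
    treeIter B o ⊆ treeIter C o :=
  transfiniteIter_mono treeDeriv_mono h o

theorem treeIter_add (B : Set (List Λ)) (δ γ : Ordinal.{0}) :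
    treeIter B (δ + γ) = treeIter (treeIter B δ) γ :=
  transfiniteIter_add treeDeriv_subset B δ γ

/-- Closure under initial segments, the empty one included (unlike `IsBTree`). -/
def PrefixClosed (B : Set (List Λ)) : Prop := ∀ t ∈ B, ∀ s, s <+: t → s ∈ B

theorem PrefixClosed.treeDeriv {B : Set (List Λ)} (h : PrefixClosed B) :
    PrefixClosed (treeDeriv B) := by
  rintro t ⟨htB, u, huB, htu, hne⟩ s hst
  refine ⟨h t htB s hst, u, huB, hst.trans htu, ?_⟩
  rintro rfl
  exact hne (htu.eq_of_length (le_antisymm htu.length_le hst.length_le))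

theorem PrefixClosed.treeIter {B : Set (List Λ)} (h : PrefixClosed B) (o : Ordinal.{0}) :
    PrefixClosed (treeIter B o) :=
  transfiniteIter_induction _ PrefixClosed h (fun _ hS => hS.treeDeriv)
    (fun _ _ _ hS t ht s hst => Set.mem_iInter.mpr fun i => hS i t (Set.mem_iInter.mp ht i) s hst) o

theorem treeIter_insert_nil_subset (B : Set (List Λ)) (o : Ordinal.{0}) :
    treeIter (insert [] B) o ⊆ insert [] (treeIter B o) := by
  induction o using Ordinal.limitRecOn with
  | zero => rw [treeIter_zero, treeIter_zero]
  | add_one o ih =>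
    rw [treeIter_add_one, treeIter_add_one]
    rintro t ⟨ht, s, hs, hts, hne⟩
    rcases ih ht with rfl | ht
    · exact Set.mem_insert _ _
    · refine Or.inr ⟨ht, s, (ih hs).resolve_left ?_, hts, hne⟩
      rintro rfl
      exact hne (List.prefix_nil.mp hts)
  | limit o ho ih =>
    rw [treeIter_limit _ ho, treeIter_limit _ ho]
    intro t ht
    refine or_iff_not_imp_left.mpr fun hne => Set.mem_iInter.mpr fun ζ => ?_
    exact ((ih ζ.1 ζ.2) (Set.mem_iInter.mp ht ζ)).resolve_left hne

theorem nil_mem_treeIter_insert {B : Set (List Λ)} (h0 : [] ∉ B) {o : Ordinal.{0}}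
    (hne : ∀ γ < o, (treeIter B γ).Nonempty) : [] ∈ treeIter (insert [] B) o := by
  induction o using Ordinal.limitRecOn with
  | zero => rw [treeIter_zero]; exact Set.mem_insert _ _
  | add_one o ih =>
    obtain ⟨s, hs⟩ := hne o (Order.lt_add_one_iff.mpr le_rfl)
    rw [treeIter_add_one]
    refine ⟨ih fun γ hγ => hne γ (hγ.trans (Order.lt_add_one_iff.mpr le_rfl)), s,
      treeIter_mono (Set.subset_insert _ _) o hs, List.nil_prefix, ?_⟩
    rintro rfl
    exact h0 (treeIter_subset B o hs)
  | limit o ho ih =>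
    rw [treeIter_limit _ ho]
    exact Set.mem_iInter.mpr fun ζ => ih ζ.1 ζ.2 fun γ hγ => hne γ (hγ.trans ζ.2)

end Trees

section TreeOperations

variable {Λ Λ' : Type*}

theorem image_map_treeDeriv {f : Λ → Λ'} (hf : Function.Injective f) (S : Set (List Λ)) :
    List.map f '' treeDeriv S = treeDeriv (List.map f '' S) := by
  ext w
  constructor
  · rintro ⟨t, ⟨ht, s, hs, hts, hne⟩, rfl⟩
    exact ⟨⟨t, ht, rfl⟩, s.map f, ⟨s, hs, rfl⟩, hts.map f,
      fun h => hne (List.map_injective_iff.mpr hf h)⟩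
  · rintro ⟨⟨t, ht, rfl⟩, _, ⟨s, hs, rfl⟩, hpre, hne⟩
    obtain ⟨l, hls, hl⟩ := List.prefix_map_iff.mp hpre
    obtain rfl := List.map_injective_iff.mpr hf hl
    exact ⟨t, ⟨ht, s, hs, hls, fun h => hne (congrArg _ h)⟩, rfl⟩

theorem image_map_treeIter {f : Λ → Λ'} (hf : Function.Injective f) (S : Set (List Λ))
    (o : Ordinal.{0}) : treeIter (List.map f '' S) o = List.map f '' treeIter S o :=
  (transfiniteIter_map _ (image_map_treeDeriv hf)
    (fun _ _ _ => (List.map_injective_iff.mpr hf).injOn.image_iInter_eq) S o).symm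

theorem shiftSet_treeIter (ζ : Ordinal.{0}) (S : Set (List Ordinal.{0})) (o : Ordinal.{0}) :
    treeIter (shiftSet ζ S) o = shiftSet ζ (treeIter S o) :=
  image_map_treeIter (fun _ _ => (add_right_inj ζ).mp) S o

variable {X : Type u} {D : Set (Set X)}

theorem OmegaOf_treeDeriv (hD : D.Nonempty) (G : Set (List Ordinal.{0})) :
    OmegaOf D (treeDeriv G) = treeDeriv (OmegaOf D G) := by
  obtain ⟨U₀, hU₀⟩ := hD
  ext w
  constructor
  · rintro ⟨⟨hwG, _, hsG, ⟨v, rfl⟩, hne⟩, hwD⟩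
    have hv : v ≠ [] := by rintro rfl; simp at hne
    refine ⟨⟨hwG, hwD⟩, w ++ v.map (·, U₀), ⟨by simpa [Function.comp_def] using hsG, ?_⟩,
      List.prefix_append _ _, by simpa using hv⟩
    simp only [List.mem_append, List.mem_map]
    rintro p (hp | ⟨a, -, rfl⟩)
    exacts [hwD p hp, hU₀]
  · rintro ⟨⟨hwG, hwD⟩, s, ⟨hsG, -⟩, hpre, hne⟩
    refine ⟨⟨hwG, s.map Prod.fst, hsG, hpre.map _, fun h => hne ?_⟩, hwD⟩
    exact hpre.eq_of_length (by simpa using congrArg List.length h)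

theorem OmegaOf_iInter {ι : Type*} [Nonempty ι] (G : ι → Set (List Ordinal.{0})) :
    OmegaOf D (⋂ i, G i) = ⋂ i, OmegaOf D (G i) := by
  ext w
  simp only [OmegaOf, Set.mem_iInter, Set.mem_ofPred_eq]
  exact ⟨fun h i => ⟨h.1 i, h.2⟩, fun h => ⟨fun i => (h i).1, (h (Classical.arbitrary ι)).2⟩⟩

theorem OmegaOf_treeIter (hD : D.Nonempty) (G : Set (List Ordinal.{0})) (o : Ordinal.{0}) :
    treeIter (OmegaOf D G) o = OmegaOf D (treeIter G o) :=
  (transfiniteIter_map _ (OmegaOf_treeDeriv hD) (fun _ _ => OmegaOf_iInter) G o).symm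

theorem OmegaOf_nonempty (hD : D.Nonempty) {G : Set (List Ordinal.{0})} (hG : G.Nonempty) :
    (OmegaOf D G).Nonempty := by
  obtain ⟨U₀, hU₀⟩ := hD
  obtain ⟨s, hs⟩ := hG
  refine ⟨s.map (·, U₀), by simpa [OmegaOf, Function.comp_def] using hs, ?_⟩
  simp only [List.mem_map]
  rintro _ ⟨a, -, rfl⟩
  exact hU₀

def attachSet (A C : Set (List Λ)) : Set (List Λ) :=
  A ∪ {w | ∃ t ∈ maxMembers A, ∃ u ∈ C, w = t ++ u}

theorem attachSet_treeIter_subset (A C : Set (List Λ)) (hC : ∀ u ∈ C, u ≠ []) {δ : Ordinal.{0}}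
    (hne : ∀ δ' < δ, (treeIter C δ').Nonempty) :
    attachSet A (treeIter C δ) ⊆ treeIter (attachSet A C) δ := by
  induction δ using Ordinal.limitRecOn with
  | zero => rw [treeIter_zero, treeIter_zero]
  | add_one δ ih =>
    have hsub := ih fun δ' h' => hne δ' (h'.trans (Order.lt_add_one_iff.mpr le_rfl))
    obtain ⟨u₀, hu₀⟩ := hne δ (Order.lt_add_one_iff.mpr le_rfl)
    rw [treeIter_add_one C, treeIter_add_one (attachSet A C)]
    rintro w (hwA | ⟨t, htM, u, hu, rfl⟩)
    · refine ⟨hsub (Or.inl hwA), ?_⟩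
      by_cases hmax : w ∈ maxMembers A
      · exact ⟨w ++ u₀, hsub (Or.inr ⟨w, hmax, u₀, hu₀, rfl⟩), List.prefix_append _ _,
          by simpa using hC u₀ (treeIter_subset C δ hu₀)⟩
      · obtain ⟨s, hsA, hws, hne⟩ : ∃ s ∈ A, w <+: s ∧ w ≠ s := by
          by_contra hcon
          exact hmax ⟨hwA, hcon⟩
        exact ⟨s, hsub (Or.inl hsA), hws, hne⟩
    · obtain ⟨huδ, u', hu', huu', hne⟩ := hu
      exact ⟨hsub (Or.inr ⟨t, htM, u, huδ, rfl⟩), t ++ u', hsub (Or.inr ⟨t, htM, u', hu', rfl⟩),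
        (List.prefix_append_right_inj t).mpr huu', fun h => hne (List.append_cancel_left h)⟩
  | limit δ hlim ih =>
    rw [treeIter_limit (attachSet A C) hlim]
    refine fun w hw => Set.mem_iInter.mpr fun ζ =>
      ih ζ.1 ζ.2 (fun δ' h' => hne δ' (h'.trans ζ.2)) ?_
    rcases hw with hwA | ⟨t, htM, u, hu, rfl⟩
    · exact Or.inl hwA
    · rw [treeIter_limit C hlim] at hu
      exact Or.inr ⟨t, htM, u, Set.mem_iInter.mp hu ζ, rfl⟩

theorem treeIter_subset_treeIter_attachSet_add (A C : Set (List Λ)) (hC : ∀ u ∈ C, u ≠ [])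
    {δ : Ordinal.{0}} (hne : ∀ δ' < δ, (treeIter C δ').Nonempty) (γ : Ordinal.{0}) :
    treeIter A γ ⊆ treeIter (attachSet A C) (δ + γ) := by
  rw [treeIter_add]
  exact treeIter_mono (Set.subset_union_left.trans (attachSet_treeIter_subset A C hC hne)) γ

end TreeOperations

section GammaTrees

theorem Gamma_zero : Gamma 0 = {[(0 : Ordinal.{0})]} := Ordinal.limitRecOn_zero ..

theorem Gamma_add_one (ζ : Ordinal.{0}) :
    Gamma (ζ + 1) = ⋃ n : ℕ, gammaStep ζ (Gamma ζ) n := Ordinal.limitRecOn_add_one ..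

theorem Gamma_limit {ξ : Ordinal.{0}} (h : Order.IsSuccLimit ξ) :
    Gamma ξ = ⋃ η : Set.Iio ξ, shiftSet (omega0 ^ η.1) (Gamma (Order.succ η.1)) :=
  Ordinal.limitRecOn_limit _ _ _ _ h

/-- Decreasing entries make every node extend to a maximal one; the bound `b` is what keeps
the grafted sequences of `gammaStep` decreasing. -/
structure IsDecreasingBTree (b : Ordinal.{0}) (S : Set (List Ordinal.{0})) : Prop where
  nonempty : S.Nonempty
  isBTree : IsBTree S
  pairwise_gt : ∀ t ∈ S, t.Pairwise (· > ·)
  lt_bound : ∀ t ∈ S, ∀ a ∈ t, a < b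

namespace IsDecreasingBTree

variable {b c : Ordinal.{0}} {S A C : Set (List Ordinal.{0})}

theorem mono_bound (h : IsDecreasingBTree b S) (hbc : b ≤ c) : IsDecreasingBTree c S :=
  ⟨h.nonempty, h.isBTree, h.pairwise_gt, fun t ht a ha => (h.lt_bound t ht a ha).trans_le hbc⟩

theorem iUnion {ι : Type*} [Nonempty ι] {S : ι → Set (List Ordinal.{0})}
    (h : ∀ i, IsDecreasingBTree b (S i)) : IsDecreasingBTree b (⋃ i, S i) := by
  refine ⟨Set.nonempty_iUnion.mpr ⟨Classical.arbitrary ι, (h _).nonempty⟩,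
    ⟨fun h0 => ?_, fun t ht s hs hst => ?_⟩, fun t ht => ?_, fun t ht => ?_⟩ <;>
    obtain ⟨i, hi⟩ := Set.mem_iUnion.mp ‹_›
  · exact (h i).isBTree.1 hi
  · exact Set.mem_iUnion.mpr ⟨i, (h i).isBTree.2 t hi s hs hst⟩
  · exact (h i).pairwise_gt t hi
  · exact (h i).lt_bound t hi

theorem shift (h : IsDecreasingBTree b S) (ζ : Ordinal.{0}) :
    IsDecreasingBTree (ζ + b) (shiftSet ζ S) := by
  refine ⟨h.nonempty.image _, ⟨?_, ?_⟩, ?_, ?_⟩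
  · rintro ⟨t, ht, hnil⟩
    exact h.isBTree.1 (List.map_eq_nil_iff.mp hnil ▸ ht)
  · rintro _ ⟨t, ht, rfl⟩ s hs hst
    obtain ⟨l, hlt, rfl⟩ := List.prefix_map_iff.mp hst
    exact ⟨l, h.isBTree.2 t ht l (by simpa using hs) hlt, rfl⟩
  · rintro _ ⟨t, ht, rfl⟩
    exact List.pairwise_map.mpr ((h.pairwise_gt t ht).imp (add_lt_add_iff_left ζ).mpr)
  · rintro _ ⟨t, ht, rfl⟩ _ ha
    obtain ⟨a, ha', rfl⟩ := List.mem_map.mp ha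
    exact (add_lt_add_iff_left ζ).mpr (h.lt_bound t ht a ha')

theorem attachSet (hA : IsDecreasingBTree b A) (hC : IsDecreasingBTree c C) (hcb : c ≤ b)
    (hsep : ∀ t ∈ A, ∀ a ∈ t, c ≤ a) : IsDecreasingBTree b (attachSet A C) := by
  refine ⟨hA.nonempty.mono Set.subset_union_left, ⟨?_, ?_⟩, ?_, ?_⟩
  · rintro (h0 | ⟨t, -, u, hu, hnil⟩)
    · exact hA.isBTree.1 h0
    · exact hC.isBTree.1 ((List.append_eq_nil_iff.mp hnil.symm).2 ▸ hu)
  · rintro _ (htA | ⟨t, htM, u, hu, rfl⟩) s hs hst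
    · exact Or.inl (hA.isBTree.2 _ htA s hs hst)
    rcases List.prefix_or_prefix_of_prefix hst (List.prefix_append t u) with hst | ⟨u', rfl⟩
    · exact Or.inl (hA.isBTree.2 t htM.1 s hs hst)
    rcases eq_or_ne u' [] with rfl | hu'
    · exact Or.inl (by simpa using htM.1)
    · exact Or.inr ⟨t, htM, u', hC.isBTree.2 u hu u' hu'
        ((List.prefix_append_right_inj t).mp hst), rfl⟩
  · rintro _ (htA | ⟨t, htM, u, hu, rfl⟩)
    · exact hA.pairwise_gt _ htA
    · refine List.pairwise_append.mpr ⟨hA.pairwise_gt t htM.1, hC.pairwise_gt u hu, ?_⟩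
      exact fun a ha a' ha' => (hC.lt_bound u hu a' ha').trans_le (hsep t htM.1 a ha)
  · rintro _ (htA | ⟨t, htM, u, hu, rfl⟩) a ha
    · exact hA.lt_bound _ htA a ha
    · rcases List.mem_append.mp ha with ha | ha
      exacts [hA.lt_bound t htM.1 a ha, (hC.lt_bound u hu a ha).trans_le hcb]

end IsDecreasingBTree

theorem omega0_opow_mul_natCast_add_one (ζ : Ordinal.{0}) (n : ℕ) :
    omega0 ^ ζ * (((n + 1 : ℕ) : Ordinal.{0}) + 1) =
      omega0 ^ ζ * ((n : Ordinal.{0}) + 1) + omega0 ^ ζ := by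
  rw [Nat.cast_add_one, mul_add_one]

theorem gammaStep_isDecreasingBTree {ζ : Ordinal.{0}} {G : Set (List Ordinal.{0})}
    (hG : IsDecreasingBTree (omega0 ^ ζ) G) (n : ℕ) :
    IsDecreasingBTree (omega0 ^ ζ * ((n : Ordinal.{0}) + 1)) (gammaStep ζ G n) := by
  induction n with
  | zero => simpa [gammaStep] using hG
  | succ n ih =>
    have hshift := hG.shift (omega0 ^ ζ * ((n : Ordinal.{0}) + 1))
    rw [← omega0_opow_mul_natCast_add_one] at hshift
    refine hshift.attachSet ih ?_ ?_
    · rw [omega0_opow_mul_natCast_add_one]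
      exact le_self_add
    · rintro _ ⟨t, -, rfl⟩ a ha
      obtain ⟨a, -, rfl⟩ := List.mem_map.mp ha
      exact le_self_add

theorem Gamma_isDecreasingBTree (ξ : Ordinal.{0}) : IsDecreasingBTree (omega0 ^ ξ) (Gamma ξ) := by
  induction ξ using Ordinal.limitRecOn with
  | zero =>
    rw [Gamma_zero, Ordinal.opow_zero]
    refine ⟨Set.singleton_nonempty _, ⟨by simp, ?_⟩, by simp, by simp⟩
    rintro t rfl s hs hst
    exact hst.eq_of_length (le_antisymm hst.length_le (List.length_pos_iff.mpr hs))
  | add_one ζ ih =>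
    rw [Gamma_add_one]
    refine IsDecreasingBTree.iUnion fun n => (gammaStep_isDecreasingBTree ih n).mono_bound ?_
    rw [Ordinal.opow_add_one]
    gcongr
    exact_mod_cast (Ordinal.natCast_lt_omega0 (n + 1)).le
  | limit ξ hlim ih =>
    have : Nonempty (Set.Iio ξ) := ⟨⟨0, hlim.bot_lt⟩⟩
    rw [Gamma_limit hlim]
    refine IsDecreasingBTree.iUnion fun η => ((ih _ (hlim.succ_lt η.2)).shift _).mono_bound ?_
    have hlt : ∀ {η'}, η' < ξ → omega0 ^ η' < omega0 ^ ξ :=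
      fun h => (Ordinal.opow_lt_opow_iff_right Ordinal.one_lt_omega0).mpr h
    exact (Ordinal.isPrincipal_add_omega0_opow ξ (hlt η.2) (hlt (hlim.succ_lt η.2))).le

theorem gammaStep_treeIter_nonempty {ζ : Ordinal.{0}} {G : Set (List Ordinal.{0})}
    (hG : IsDecreasingBTree (omega0 ^ ζ) G) (hGne : ∀ γ < omega0 ^ ζ, (treeIter G γ).Nonempty)
    (n : ℕ) :
    ∀ γ < omega0 ^ ζ * ((n : Ordinal.{0}) + 1), (treeIter (gammaStep ζ G n) γ).Nonempty := by
  induction n with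
  | zero => simpa [gammaStep] using hGne
  | succ n ih =>
    intro γ hγ
    set δ := omega0 ^ ζ * ((n : Ordinal.{0}) + 1)
    rw [omega0_opow_mul_natCast_add_one] at hγ
    have hC : ∀ u ∈ gammaStep ζ G n, u ≠ [] :=
      fun u hu h0 => (gammaStep_isDecreasingBTree hG n).isBTree.1 (h0 ▸ hu)
    have key : ∀ γ' < omega0 ^ ζ, (treeIter (gammaStep ζ G (n + 1)) (δ + γ')).Nonempty := by
      intro γ' hγ'
      obtain ⟨t, ht⟩ := hGne γ' hγ'
      refine ⟨t.map (δ + ·), treeIter_subset_treeIter_attachSet_add _ _ hC ih γ' ?_⟩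
      rw [shiftSet_treeIter]
      exact Set.mem_image_of_mem _ ht
    rcases lt_or_ge γ δ with hγδ | hδγ
    · refine (key 0 (Ordinal.opow_pos _ Ordinal.omega0_pos)).mono (treeIter_antitone _ ?_)
      simpa using hγδ.le
    · obtain ⟨γ', rfl⟩ := exists_add_of_le hδγ
      exact key γ' ((add_lt_add_iff_left δ).mp hγ)

theorem Gamma_treeIter_nonempty (ξ : Ordinal.{0}) :
    ∀ γ < omega0 ^ ξ, (treeIter (Gamma ξ) γ).Nonempty := by
  induction ξ using Ordinal.limitRecOn with
  | zero =>
    intro γ hγ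
    rw [Ordinal.opow_zero, Order.lt_one_iff] at hγ
    rw [hγ, treeIter_zero]
    exact (Gamma_isDecreasingBTree 0).nonempty
  | add_one ζ ih =>
    intro γ hγ
    have hω : omega0 ^ ζ ≠ 0 := (Ordinal.opow_pos _ Ordinal.omega0_pos).ne'
    rw [Ordinal.opow_add_one, Ordinal.lt_mul_iff_div_lt hω] at hγ
    obtain ⟨n, hn⟩ := Ordinal.lt_omega0.mp hγ
    have hγn : γ < omega0 ^ ζ * ((n : Ordinal.{0}) + 1) := by
      simpa [hn, Order.succ_eq_add_one] using Ordinal.lt_mul_succ_div γ hω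
    refine (gammaStep_treeIter_nonempty (Gamma_isDecreasingBTree ζ) ih n γ hγn).mono
      (treeIter_mono ?_ γ)
    rw [Gamma_add_one]
    exact Set.subset_iUnion (fun n => gammaStep ζ (Gamma ζ) n) n
  | limit ξ hlim ih =>
    intro γ hγ
    obtain ⟨η, hη, hγη⟩ := (Ordinal.lt_opow_of_isSuccLimit Ordinal.omega0_ne_zero hlim).mp hγ
    have hsub : shiftSet (omega0 ^ η) (Gamma (Order.succ η)) ⊆ Gamma ξ := by
      rw [Gamma_limit hlim]
      exact Set.subset_iUnion
        (fun η' : Set.Iio ξ => shiftSet (omega0 ^ η'.1) (Gamma (Order.succ η'.1))) ⟨η, hη⟩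
    have hγη' : γ < omega0 ^ Order.succ η :=
      hγη.trans_le (Ordinal.opow_le_opow_right Ordinal.omega0_pos (Order.le_succ η))
    refine ((ih _ (hlim.succ_lt hη) γ hγη').image (List.map (omega0 ^ η + ·))).mono ?_
    rw [← shiftSet, ← shiftSet_treeIter]
    exact treeIter_mono hsub γ

end GammaTrees

section MaximalExtensions

theorem getLastD_append_lt {l w : List Ordinal.{0}} (hl : l ≠ []) (hw : w ≠ [])
    (h : (l ++ w).Pairwise (· > ·)) : (l ++ w).getLastD 0 < l.getLastD 0 := by
  simp only [List.getLastD_eq_getLast?, List.getLast?_append, List.getLast?_eq_some_getLast hw,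
    List.getLast?_eq_some_getLast hl, Option.some_or, Option.getD_some]
  exact (List.pairwise_append.mp h).2.2 _ (List.getLast_mem hl) _ (List.getLast_mem hw)

theorem exists_maxMembers_of_pairwise {Λ : Type*} {B : Set (List Λ)} (r : Λ → Ordinal.{0})
    (h0 : [] ∉ B) (hB : ∀ s ∈ B, (s.map r).Pairwise (· > ·)) {t : List Λ}
    (ht : ∃ s ∈ B, t <+: s) : ∃ s ∈ maxMembers B, t <+: s := by
  obtain ⟨m, ⟨hmB, htm⟩, hmin⟩ :=
    (InvImage.wf (fun s : List Λ => (s.map r).getLastD 0) Ordinal.lt_wf).has_min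
      {s ∈ B | t <+: s} ht
  refine ⟨m, ⟨hmB, ?_⟩, htm⟩
  rintro ⟨_, hsB, ⟨w, rfl⟩, hne⟩
  refine hmin _ ⟨hsB, htm.trans (List.prefix_append m w)⟩ ?_
  have hm : m.map r ≠ [] := by simpa using fun h : m = [] => h0 (h ▸ hmB)
  have hw : w.map r ≠ [] := by simpa using hne
  simpa [InvImage] using getLastD_append_lt hm hw (by simpa using hB _ hsB)

end MaximalExtensions

section OmegaTrees

variable {X : Type u} {D : Set (Set X)}

theorem prefixClosed_insert_nil_OmegaOf {G : Set (List Ordinal.{0})} (hG : IsBTree G) :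
    PrefixClosed (insert [] (OmegaOf D G)) := by
  rintro t (rfl | ⟨htG, htD⟩) s hst
  · exact Or.inl (List.prefix_nil.mp hst)
  rcases eq_or_ne s [] with rfl | hs
  · exact Or.inl rfl
  · exact Or.inr ⟨hG.2 _ htG _ (by simpa using hs) (hst.map _), fun p hp => htD p (hst.subset hp)⟩

theorem exists_forall_append_mem_treeIter (hD : D.Nonempty) {G : Set (List Ordinal.{0})}
    (hG : IsBTree G) {t : List (Ordinal.{0} × Set X)} {γ : Ordinal.{0}}
    (ht : t ∈ treeIter (insert [] (OmegaOf D G)) (γ + 1)) :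
    ∃ ζ, ∀ U ∈ D, t ++ [(ζ, U)] ∈ treeIter (OmegaOf D G) γ := by
  rw [treeIter_add_one] at ht
  obtain ⟨-, _, hs, ⟨w, rfl⟩, hne⟩ := ht
  obtain ⟨p, w, rfl⟩ := List.exists_cons_of_ne_nil (by rintro rfl; simp at hne : w ≠ [])
  have hc := (prefixClosed_insert_nil_OmegaOf hG).treeIter γ _ hs (t ++ [p]) (by simp)
  have hc' : t ++ [p] ∈ OmegaOf D (treeIter G γ) := by
    rw [← OmegaOf_treeIter hD]
    exact (treeIter_insert_nil_subset _ γ hc).resolve_left (by simp)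
  refine ⟨p.1, fun U hU => ?_⟩
  rw [OmegaOf_treeIter hD]
  refine ⟨by simpa using hc'.1, ?_⟩
  simp only [List.mem_append, List.mem_singleton]
  rintro q (hq | rfl)
  exacts [hc'.2 q (List.mem_append_left _ hq), hU]

end OmegaTrees

section WeakStar

variable {X : Type u} [NormedAddCommGroup X] [NormedSpace ℝ X]

theorem IsWeakNhdBasis.nonempty {D : Set (Set X)} (hD : IsWeakNhdBasis D) : D.Nonempty :=
  let ⟨U, hU, _⟩ := hD.2.1 Set.univ Filter.univ_mem
  ⟨U, hU⟩

def IsWStarClosed (S : Set (StrongDual ℝ X)) : Prop :=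
  IsClosed (StrongDual.toWeakDual '' S)

theorem isWStarClosed_wstarClosure (S : Set (StrongDual ℝ X)) :
    IsWStarClosed (wstarClosure S) := by
  rw [IsWStarClosed, wstarClosure, Set.image_preimage_eq _ StrongDual.toWeakDual.surjective]
  exact isClosed_closure

theorem IsWStarClosed.inter {S T : Set (StrongDual ℝ X)} (hS : IsWStarClosed S)
    (hT : IsWStarClosed T) : IsWStarClosed (S ∩ T) := by
  rw [IsWStarClosed, Set.image_inter StrongDual.toWeakDual.injective]
  exact IsClosed.inter hS hT

theorem IsWStarClosed.iInter {ι : Type*} [Nonempty ι] {S : ι → Set (StrongDual ℝ X)}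
    (h : ∀ i, IsWStarClosed (S i)) : IsWStarClosed (⋂ i, S i) := by
  rw [IsWStarClosed, StrongDual.toWeakDual.injective.injOn.image_iInter_eq]
  exact isClosed_iInter h

theorem mem_wstarClosure_iff {S : Set (StrongDual ℝ X)} {φ : StrongDual ℝ X} :
    φ ∈ wstarClosure S ↔ StrongDual.toWeakDual φ ∈ closure (StrongDual.toWeakDual '' S) :=
  Iff.rfl

theorem subset_wstarClosure (S : Set (StrongDual ℝ X)) : S ⊆ wstarClosure S :=
  fun _ hφ => mem_wstarClosure_iff.mpr (subset_closure (Set.mem_image_of_mem _ hφ))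

theorem wstarClosure_mono {S T : Set (StrongDual ℝ X)} (h : S ⊆ T) :
    wstarClosure S ⊆ wstarClosure T :=
  fun _ hφ => mem_wstarClosure_iff.mpr (closure_mono (Set.image_mono h) hφ)

theorem le_apply_of_mem_wstarClosure {S : Set (StrongDual ℝ X)} {φ : StrongDual ℝ X}
    (hφ : φ ∈ wstarClosure S) {a : ℝ} {x : X} (h : ∀ ψ ∈ S, a ≤ ψ x) : a ≤ φ x := by
  refine closure_minimal ?_ (isClosed_le continuous_const (WeakDual.eval_continuous x)) hφ
  rintro _ ⟨ψ, hψ, rfl⟩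
  exact h ψ hψ

theorem mem_of_mem_wstarNhds {φ : StrongDual ℝ X} {V : Set (StrongDual ℝ X)}
    (hV : V ∈ wstarNhds φ) : φ ∈ V :=
  mem_of_mem_nhds (Filter.mem_comap'.mp hV) rfl

theorem inter_nonempty_of_mem_wstarNhds {S V : Set (StrongDual ℝ X)} {φ : StrongDual ℝ X}
    (hφ : φ ∈ wstarClosure S) (hV : V ∈ wstarNhds φ) : (V ∩ S).Nonempty := by
  obtain ⟨W, hW, hWV⟩ := Filter.mem_comap.mp hV
  obtain ⟨_, hW', ψ, hψ, rfl⟩ := mem_closure_iff_nhds.mp (mem_wstarClosure_iff.mp hφ) W hW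
  exact ⟨ψ, hWV hW', hψ⟩

theorem IsWStarCompact.isBounded [CompleteSpace X] {K : Set (StrongDual ℝ X)}
    (hK : IsWStarCompact K) : Bornology.IsBounded K := by
  have hpt : ∀ x : X, ∃ C, ∀ φ : K, ‖(φ : StrongDual ℝ X) x‖ ≤ C := fun x => by
    obtain ⟨C, hC⟩ := isBounded_iff_forall_norm_le.mp
      (hK.image (WeakDual.eval_continuous x)).isBounded
    exact ⟨C, fun φ => hC _ ⟨_, Set.mem_image_of_mem _ φ.2, rfl⟩⟩
  obtain ⟨C, hC⟩ := banach_steinhaus hpt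
  exact isBounded_iff_forall_norm_le.mpr ⟨C, fun φ hφ => hC ⟨φ, hφ⟩⟩

theorem IsWStarCompact.iInter_nonempty {K : Set (StrongDual ℝ X)} (hK : IsWStarCompact K)
    {ι : Type*} [Nonempty ι] (L : ι → Set (StrongDual ℝ X)) (hdir : Directed (· ⊇ ·) L)
    (hne : ∀ i, (L i).Nonempty) (hcl : ∀ i, IsWStarClosed (L i)) (hsub : ∀ i, L i ⊆ K) :
    (⋂ i, L i).Nonempty := by
  have h := IsCompact.nonempty_iInter_of_directed_nonempty_isCompact_isClosed
    (fun i => StrongDual.toWeakDual '' L i)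
    (Directed.mono_comp (· ⊇ ·) (g := fun s => StrongDual.toWeakDual '' s)
      (fun _ _ h => Set.image_mono h) hdir)
    (fun i => (hne i).image _) (fun i => hK.of_isClosed_subset (hcl i) (Set.image_mono (hsub i)))
    hcl
  rwa [← StrongDual.toWeakDual.injective.injOn.image_iInter_eq, Set.image_nonempty] at h

theorem szDeriv_of_pos {ε : ℝ} (hε : 0 < ε) (S : Set (StrongDual ℝ X)) :
    szDeriv ε S = {f | f ∈ S ∧ ∀ V ∈ wstarNhds f, ε < diam (V ∩ S)} :=
  if_neg hε.not_ge

theorem szDeriv_subset (ε : ℝ) (S : Set (StrongDual ℝ X)) : szDeriv ε S ⊆ S := by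
  unfold szDeriv
  split_ifs
  exacts [subset_rfl, fun _ hf => hf.1]

theorem IsWStarClosed.szDeriv {ε : ℝ} (hε : 0 < ε) {S : Set (StrongDual ℝ X)}
    (hS : IsWStarClosed S) (hbd : Bornology.IsBounded S) : IsWStarClosed (szDeriv ε S) := by
  refine isClosed_of_closure_subset fun y hy => ?_
  obtain ⟨φ, hφS, rfl⟩ := hS.closure_subset (closure_mono (Set.image_mono (szDeriv_subset ε S)) hy)
  rw [szDeriv_of_pos hε]
  refine ⟨φ, ⟨hφS, fun V hV => ?_⟩, rfl⟩
  obtain ⟨W, hW, hWV⟩ := Filter.mem_comap.mp hV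
  obtain ⟨_, hψW, ψ, hψ, rfl⟩ := mem_closure_iff_nhds.mp hy (interior W) (interior_mem_nhds.mpr hW)
  rw [szDeriv_of_pos hε] at hψ
  refine (hψ.2 _ (Filter.preimage_mem_comap (isOpen_interior.mem_nhds hψW))).trans_le ?_
  exact diam_mono (Set.inter_subset_inter_left _ ((Set.preimage_mono interior_subset).trans hWV))
    (hbd.subset Set.inter_subset_right)

theorem szIter_zero (ε : ℝ) (K : Set (StrongDual ℝ X)) : szIter ε K 0 = K :=
  transfiniteIter_zero _ K

theorem szIter_add_one (ε : ℝ) (K : Set (StrongDual ℝ X)) (o : Ordinal.{0}) :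
    szIter ε K (o + 1) = szDeriv ε (szIter ε K o) := transfiniteIter_add_one _ K o

theorem szIter_limit (ε : ℝ) (K : Set (StrongDual ℝ X)) {o : Ordinal.{0}}
    (h : Order.IsSuccLimit o) : szIter ε K o = ⋂ ζ : Set.Iio o, szIter ε K ζ :=
  transfiniteIter_limit _ K h

theorem szIter_subset (ε : ℝ) (K : Set (StrongDual ℝ X)) (o : Ordinal.{0}) : szIter ε K o ⊆ K :=
  transfiniteIter_subset (szDeriv_subset ε) K o

theorem szIter_antitone (ε : ℝ) (K : Set (StrongDual ℝ X)) : Antitone (szIter ε K) :=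
  transfiniteIter_antitone (szDeriv_subset ε) K

theorem IsWStarCompact.isWStarClosed_szIter [CompleteSpace X] {K : Set (StrongDual ℝ X)}
    (hK : IsWStarCompact K) {ε : ℝ} (hε : 0 < ε) (o : Ordinal.{0}) :
    IsWStarClosed (szIter ε K o) :=
  (transfiniteIter_induction _ (fun S => IsWStarClosed S ∧ S ⊆ K) ⟨hK.isClosed, subset_rfl⟩
    (fun S hS => ⟨hS.1.szDeriv hε (hK.isBounded.subset hS.2), (szDeriv_subset ε S).trans hS.2⟩)
    (fun ι _ S hS => ⟨IsWStarClosed.iInter fun i => (hS i).1,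
      (Set.iInter_subset S (Classical.arbitrary ι)).trans (hS _).2⟩) o).1

theorem abs_lt_mem_weakNhds (φ : StrongDual ℝ X) {δ : ℝ} (hδ : 0 < δ) :
    {x : X | |φ x| < δ} ∈ weakNhds (0 : X) := by
  have hc : Continuous fun y : WeakSpace ℝ X => |(topDualPairing ℝ X).flip y φ| :=
    (WeakBilin.eval_continuous _ φ).abs
  exact Filter.preimage_mem_comap
    ((isOpen_lt hc continuous_const).mem_nhds (show |φ (0 : X)| < δ by simpa using hδ))

end WeakStar

section SzlenkDerivation

variable {X : Type u} [NormedAddCommGroup X] [NormedSpace ℝ X]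
  {D : Set (Set X)} {ε σ a : ℝ}

theorem mem_szDeriv_of_forall_mem_wstarClosure {L : Set (StrongDual ℝ X)}
    (hL : Bornology.IsBounded L) (hε : 0 < ε) (haσ : ε * σ < a) (hD : IsWeakNhdBasis D)
    {ψ : D → StrongDual ℝ X} {x : D → X} (hψ : ∀ U : D, ψ U ∈ L) (hx : ∀ U : D, x U ∈ (U : Set X))
    (hxσ : ∀ U : D, ‖x U‖ ≤ σ) (hψx : ∀ U : D, a ≤ ψ U (x U)) {φ : StrongDual ℝ X} (hφ : φ ∈ L)
    (hclust : ∀ U₀ : D, φ ∈ wstarClosure (ψ '' {U | (U : Set X) ⊆ U₀})) :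
    φ ∈ szDeriv ε L := by
  rw [szDeriv_of_pos hε]
  refine ⟨hφ, fun V hV => ?_⟩
  obtain ⟨U₀, hU₀D, hU₀⟩ :=
    hD.2.1 _ (abs_lt_mem_weakNhds φ (by linarith : 0 < (a - ε * σ) / 2))
  obtain ⟨_, hψV, U, hU, rfl⟩ := inter_nonempty_of_mem_wstarNhds (hclust ⟨U₀, hU₀D⟩) hV
  have hfar : ε < ‖ψ U - φ‖ := by
    have hsmall : |φ (x U)| < (a - ε * σ) / 2 := hU₀ (hU (hx U))
    rw [abs_lt] at hsmall
    have hle : (ψ U - φ) (x U) ≤ ‖ψ U - φ‖ * σ :=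
      (le_abs_self _).trans (((ψ U - φ).le_opNorm _).trans
        (mul_le_mul_of_nonneg_left (hxσ U) (norm_nonneg _)))
    rw [sub_apply] at hle
    by_contra! h
    have := mul_le_mul_of_nonneg_right h ((norm_nonneg _).trans (hxσ U))
    linarith [hψx U]
  calc ε < ‖ψ U - φ‖ := hfar
    _ = dist (ψ U) φ := (dist_eq_norm _ _).symm
    _ ≤ diam (V ∩ L) := dist_le_diam_of_mem (hL.subset Set.inter_subset_right)
        ⟨hψV, hψ U⟩ ⟨mem_of_mem_wstarNhds hV, hφ⟩

variable [CompleteSpace X] {K : Set (StrongDual ℝ X)}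

theorem szIter_add_one_inter_wstarClosure_nonempty (hK : IsWStarCompact K) (hε : 0 < ε)
    (haσ : ε * σ < a) (hD : IsWeakNhdBasis D) (S : Set (StrongDual ℝ X)) (γ : Ordinal.{0})
    {ψ : D → StrongDual ℝ X} {x : D → X} (hψ : ∀ U : D, ψ U ∈ szIter ε K γ ∩ wstarClosure S)
    (hx : ∀ U : D, x U ∈ (U : Set X)) (hxσ : ∀ U : D, ‖x U‖ ≤ σ) (hψx : ∀ U : D, a ≤ ψ U (x U)) :
    (szIter ε K (γ + 1) ∩ wstarClosure S).Nonempty := by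
  have : Nonempty D := hD.nonempty.to_subtype
  set C : D → Set (StrongDual ℝ X) := fun U₀ => wstarClosure (ψ '' {U | (U : Set X) ⊆ U₀})
  have hdir : Directed (· ⊇ ·) fun U₀ => C U₀ ∩ (szIter ε K γ ∩ wstarClosure S) := by
    intro U₁ U₂
    obtain ⟨W, hWD, hW⟩ := hD.2.2 U₁ U₁.2 U₂ U₂.2
    refine ⟨⟨W, hWD⟩, ?_, ?_⟩ <;>
      refine Set.inter_subset_inter_left _ (wstarClosure_mono (Set.image_mono fun U hU => ?_))
    exacts [hU.trans (hW.trans Set.inter_subset_left), hU.trans (hW.trans Set.inter_subset_right)]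
  have hL := (hK.isWStarClosed_szIter hε γ).inter (isWStarClosed_wstarClosure S)
  obtain ⟨φ, hφ⟩ := hK.iInter_nonempty _ hdir
    (fun U₀ => ⟨ψ U₀, subset_wstarClosure _ (Set.mem_image_of_mem ψ (Set.Subset.refl _)), hψ U₀⟩)
    (fun _ => (isWStarClosed_wstarClosure _).inter hL)
    (fun _ => Set.inter_subset_right.trans (Set.inter_subset_left.trans (szIter_subset ε K γ)))
  have hφL := (Set.mem_iInter.mp hφ (Classical.arbitrary D)).2
  refine ⟨φ, ?_, hφL.2⟩
  rw [szIter_add_one]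
  exact mem_szDeriv_of_forall_mem_wstarClosure (hK.isBounded.subset (szIter_subset ε K γ))
    hε haσ hD (fun U => (hψ U).1) hx hxσ hψx hφL.1 fun U₀ => (Set.mem_iInter.mp hφ U₀).1

theorem szIter_limit_inter_wstarClosure_nonempty (hK : IsWStarCompact K) (hε : 0 < ε)
    {β : Ordinal.{0}} (hβ : Order.IsSuccLimit β) (S : Set (StrongDual ℝ X))
    (h : ∀ γ < β, (szIter ε K γ ∩ wstarClosure S).Nonempty) :
    (szIter ε K β ∩ wstarClosure S).Nonempty := by
  have : Nonempty (Set.Iio β) := ⟨⟨0, hβ.bot_lt⟩⟩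
  rw [szIter_limit ε K hβ, Set.iInter_inter]
  refine hK.iInter_nonempty _ ?_ (fun γ => h γ γ.2)
    (fun γ => (hK.isWStarClosed_szIter hε γ).inter (isWStarClosed_wstarClosure S))
    (fun γ => Set.inter_subset_left.trans (szIter_subset ε K γ))
  exact Antitone.directed_ge fun γ₁ γ₂ hγ =>
    Set.inter_subset_inter_left _ (szIter_antitone ε K hγ)

end SzlenkDerivation

theorem exists_mem_szIter_inter_wstarClosure_maxMembers {X : Type u}
    [NormedAddCommGroup X] [NormedSpace ℝ X] [CompleteSpace X]
    {K : Set (StrongDual ℝ X)} (hK : IsWStarCompact K) {ξ : Ordinal.{0}} {D : Set (Set X)}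
    (hD : IsWeakNhdBasis D) {σ ε a : ℝ} (hε : 0 < ε) (haσ : ε * σ < a)
    {g : List (Ordinal.{0} × Set X) → X} (hg : NormallyWNull (OmegaOf D (Gamma ξ)) g)
    (hgb : ∀ t ∈ OmegaOf D (Gamma ξ), ‖g t‖ ≤ σ)
    {F : List (Ordinal.{0} × Set X) → StrongDual ℝ X}
    (hF : ∀ t ∈ maxMembers (OmegaOf D (Gamma ξ)), F t ∈ K)
    (hlb : ∀ t ∈ maxMembers (OmegaOf D (Gamma ξ)), ∀ s ∈ OmegaOf D (Gamma ξ),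
      s <+: t → a ≤ F t (g s)) (β : Ordinal.{0}) :
    ∀ t ∈ treeIter (insert [] (OmegaOf D (Gamma ξ))) β,
      (szIter ε K β ∩
        wstarClosure (F '' {s ∈ maxMembers (OmegaOf D (Gamma ξ)) | t <+: s})).Nonempty := by
  set Ω := OmegaOf D (Gamma ξ)
  induction β using Ordinal.limitRecOn with
  | zero =>
    intro t ht
    rw [treeIter_zero] at ht
    have hΓ := Gamma_isDecreasingBTree ξ
    have hext : ∃ s ∈ Ω, t <+: s := by
      rcases ht with rfl | ht
      · obtain ⟨s, hs⟩ := OmegaOf_nonempty hD.nonempty hΓ.nonempty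
        exact ⟨s, hs, List.nil_prefix⟩
      · exact ⟨t, ht, List.prefix_rfl⟩
    obtain ⟨s, hs, hts⟩ := exists_maxMembers_of_pairwise Prod.fst (fun h => hΓ.isBTree.1 h.1)
      (fun s hs => hΓ.pairwise_gt _ hs.1) hext
    exact ⟨F s, by simpa [szIter_zero] using hF s hs,
      subset_wstarClosure _ ⟨s, ⟨hs, hts⟩, rfl⟩⟩
  | add_one γ ih =>
    intro t ht
    obtain ⟨ζ, hζ⟩ :=
      exists_forall_append_mem_treeIter hD.nonempty (Gamma_isDecreasingBTree ξ).isBTree ht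
    have hchild : ∀ U : D, t ++ [(ζ, U.1)] ∈ Ω := fun U => treeIter_subset _ γ (hζ U U.2)
    choose ψ hψ using fun U : D =>
      ih (t ++ [(ζ, U.1)]) (treeIter_mono (Set.subset_insert _ _) γ (hζ U U.2))
    have hsub : ∀ U : D,
        {s ∈ maxMembers Ω | t ++ [(ζ, U.1)] <+: s} ⊆ {s ∈ maxMembers Ω | t <+: s} :=
      fun U s hs => ⟨hs.1, (List.prefix_append _ _).trans hs.2⟩
    refine szIter_add_one_inter_wstarClosure_nonempty hK hε haσ hD _ γ
      (x := fun U => g (t ++ [(ζ, U.1)]))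
      (fun U => ⟨(hψ U).1, wstarClosure_mono (Set.image_mono (hsub U)) (hψ U).2⟩)
      (fun U => hg _ (hchild U) t ζ U rfl) (fun U => hgb _ (hchild U))
      (fun U => le_apply_of_mem_wstarClosure (hψ U).2 ?_)
    rintro _ ⟨s, hs, rfl⟩
    exact hlb s hs.1 _ (hchild U) hs.2
  | limit β hβ ih =>
    intro t ht
    rw [treeIter_limit _ hβ] at ht
    exact szIter_limit_inter_wstarClosure_nonempty hK hε hβ _
      fun γ hγ => ih γ hγ t (Set.mem_iInter.mp ht ⟨γ, hγ⟩)

theorem statement10_general {X : Type u}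
    [NormedAddCommGroup X] [NormedSpace ℝ X] [CompleteSpace X]
    (K : Set (StrongDual ℝ X)) (hK : IsWStarCompact K)
    (ξ : Ordinal.{0}) (D : Set (Set X)) (hD : IsWeakNhdBasis D)
    (σ ε a : ℝ) (hσ : 0 < σ) (hε : 0 < ε) (haσ : ε < a / σ)
    (g : List (Ordinal.{0} × Set X) → X)
    (hg : NormallyWNull (OmegaOf D (Gamma ξ)) g)
    (hgb : ∀ t ∈ OmegaOf D (Gamma ξ), ‖g t‖ ≤ σ)
    (F : List (Ordinal.{0} × Set X) → StrongDual ℝ X)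
    (hF : ∀ t ∈ maxMembers (OmegaOf D (Gamma ξ)), F t ∈ K)
    (hlb : ∀ t ∈ maxMembers (OmegaOf D (Gamma ξ)), ∀ s ∈ OmegaOf D (Gamma ξ),
      s <+: t → a ≤ F t (g s)) :
    (szIter ε K (omega0 ^ ξ) ∩
      wstarClosure (F '' maxMembers (OmegaOf D (Gamma ξ)))).Nonempty := by
  have hroot : [] ∈ treeIter (insert [] (OmegaOf D (Gamma ξ))) (omega0 ^ ξ) := by
    refine nil_mem_treeIter_insert (fun h => (Gamma_isDecreasingBTree ξ).isBTree.1 h.1)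
      fun γ hγ => ?_
    rw [OmegaOf_treeIter hD.nonempty]
    exact OmegaOf_nonempty hD.nonempty (Gamma_treeIter_nonempty ξ γ hγ)
  simpa using exists_mem_szIter_inter_wstarClosure_maxMembers hK hD hε
    ((lt_div_iff₀ hσ).mp haσ) hg hgb hF hlb _ [] hroot

/-- Let `X` be a Banach space, `K ⊆ X*` a nonempty weak*-compact set,
`ξ` an ordinal, `D` a weak neighborhood basis at `0` in `X` directed by reverse
inclusion, and `Ω_ξ = Γ_ξ D`.  Suppose `σ, ε, a > 0` with `a/σ > ε`,
`(x_t)_{t∈Ω_ξ} ⊆ σB_X` is normally weakly null, and `(x*_t)_{t∈MAX(Ω_ξ)} ⊆ K`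
satisfies `x*_t(x_s) ≥ a` for every `s ⪯ t ∈ MAX(Ω_ξ)`.  Then
`s_ε^{ω^ξ}(K) ∩ cl_{w*}{x*_t : t ∈ MAX(Ω_ξ)} ≠ ∅`. -/
theorem statement10 {X : Type u}
    [NormedAddCommGroup X] [NormedSpace ℝ X] [CompleteSpace X]
    (K : Set (StrongDual ℝ X)) (hK : IsWStarCompact K) (hKne : K.Nonempty)
    (ξ : Ordinal.{0}) (D : Set (Set X)) (hD : IsWeakNhdBasis D)
    (σ ε a : ℝ) (hσ : 0 < σ) (hε : 0 < ε) (ha : 0 < a) (haσ : ε < a / σ)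
    (g : List (Ordinal.{0} × Set X) → X)
    (hg : NormallyWNull (OmegaOf D (Gamma ξ)) g)
    (hgb : ∀ t ∈ OmegaOf D (Gamma ξ), ‖g t‖ ≤ σ)
    (F : List (Ordinal.{0} × Set X) → StrongDual ℝ X)
    (hF : ∀ t ∈ maxMembers (OmegaOf D (Gamma ξ)), F t ∈ K)
    (hlb : ∀ t ∈ maxMembers (OmegaOf D (Gamma ξ)), ∀ s ∈ OmegaOf D (Gamma ξ),
      s <+: t → a ≤ F t (g s)) :
    (szIter ε K (omega0 ^ ξ) ∩
      wstarClosure (F '' maxMembers (OmegaOf D (Gamma ξ)))).Nonempty :=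
  statement10_general K hK ξ D hD σ ε a hσ hε haσ g hg hgb F hF hlb

end SzlenkPaper
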